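/- Let f be a discrete Morse-Bott function on a finite abstract simplicial complex K and let C^{1,red}, …, C^{l,red} be the reduced collections of f that are nonempty and not noncritical pairs. Then Σ_{i=1}^{l} Σ_{σ ∈ C^{i,red}} (−1)^{dim σ} = Σ_{σ ∈ K} (−1)^{dim σ}, i.e., the sum of the Euler characteristics of these reduced collections equals the Euler characteristic of K. -/

import Mathlib

open Finset

noncomputable section
open scoped Classical

/-- `σ` is a facet of `τ`: `σ ⊆ τ` and `dim σ = dim τ − 1`. -/
def Facet (σ τ : Finset ℕ) : Prop := σ ⊆ τ ∧ σ.card + 1 = τ.card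

/-- A finite abstract simplicial complex: a finite family of nonempty finite sets
closed under taking nonempty subsets. -/
def IsComplex (K : Finset (Finset ℕ)) : Prop :=
  (∀ σ ∈ K, σ.Nonempty) ∧ ∀ σ ∈ K, ∀ ν, ν ⊆ σ → ν.Nonempty → ν ∈ K

/-- The closure of a set of cells: all nonempty subsets of its cells. -/
def closureOf (S : Finset (Finset ℕ)) : Finset (Finset ℕ) :=
  S.biUnion fun σ => σ.powerset.filter fun ν => ν ≠ ∅

/-- The graph on `C` joining two cells whenever their closures intersect is connected. -/
def ConnectedOn (C : Finset (Finset ℕ)) : Prop :=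
  ∀ a ∈ C, ∀ b ∈ C,
    Relation.ReflTransGen
      (fun x y => x ∈ C ∧ y ∈ C ∧ (closureOf {x} ∩ closureOf {y}).Nonempty) a b

/-- A nonempty set of cells of `K`, all with the same `f`-value, whose
closure-intersection graph is connected. -/
def IsPreCollection (K : Finset (Finset ℕ)) (f : Finset ℕ → ℝ) (C : Finset (Finset ℕ)) :
    Prop :=
  C ⊆ K ∧ C.Nonempty ∧ (∀ σ ∈ C, ∀ τ ∈ C, f σ = f τ) ∧ ConnectedOn C

/-- A collection for `f`: a maximal constant-value connected set of cells. -/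
def IsCollection (K : Finset (Finset ℕ)) (f : Finset ℕ → ℝ) (C : Finset (Finset ℕ)) :
    Prop :=
  IsPreCollection K f C ∧ ∀ C', IsPreCollection K f C' → C ⊆ C' → C' = C

/-- `#{τ ∉ C : σ < τ, f(τ) < f(σ)}`. -/
def UpCount (K : Finset (Finset ℕ)) (f : Finset ℕ → ℝ) (C : Finset (Finset ℕ))
    (σ : Finset ℕ) : ℕ :=
  (K.filter fun τ => τ ∉ C ∧ Facet σ τ ∧ f τ < f σ).card

/-- `#{ν ∉ C : ν < σ, f(ν) > f(σ)}`. -/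
def DownCount (K : Finset (Finset ℕ)) (f : Finset ℕ → ℝ) (C : Finset (Finset ℕ))
    (σ : Finset ℕ) : ℕ :=
  (K.filter fun ν => ν ∉ C ∧ Facet ν σ ∧ f σ < f ν).card

/-- A discrete Morse-Bott function on `K`. -/
def IsMorseBott (K : Finset (Finset ℕ)) (f : Finset ℕ → ℝ) : Prop :=
  ∀ C, IsCollection K f C → ∀ σ ∈ C, UpCount K f C σ ≤ 1 ∧ DownCount K f C σ ≤ 1

/-- `σ` is upward noncritical w.r.t. `C`. -/
def UpNoncrit (K : Finset (Finset ℕ)) (f : Finset ℕ → ℝ) (C : Finset (Finset ℕ))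
    (σ : Finset ℕ) : Prop :=
  ∃ w ∈ K, w ∉ C ∧ Facet σ w ∧ f w < f σ

/-- `σ` is downward noncritical w.r.t. `C`. -/
def DownNoncrit (K : Finset (Finset ℕ)) (f : Finset ℕ → ℝ) (C : Finset (Finset ℕ))
    (σ : Finset ℕ) : Prop :=
  ∃ w ∈ K, w ∉ C ∧ Facet w σ ∧ f σ < f w

/-- The reduced collection `C^red`: the cells of `C` that are neither upward nor
downward noncritical w.r.t. `C`. -/
def reducedOf (K : Finset (Finset ℕ)) (f : Finset ℕ → ℝ) (C : Finset (Finset ℕ)) :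
    Finset (Finset ℕ) :=
  C.filter fun σ => ¬ UpNoncrit K f C σ ∧ ¬ DownNoncrit K f C σ

/-- A noncritical pair: a two-element set `{σ, τ}` with `σ < τ` and `f σ ≥ f τ`. -/
def IsNoncritPair (f : Finset ℕ → ℝ) (S : Finset (Finset ℕ)) : Prop :=
  ∃ σ τ, Facet σ τ ∧ f τ ≤ f σ ∧ S = {σ, τ}

/-- A discrete Morse function in Forman's sense. -/
def IsDiscreteMorse (K : Finset (Finset ℕ)) (g : Finset ℕ → ℝ) : Prop :=
  ∀ σ ∈ K, (K.filter fun τ => Facet σ τ ∧ g τ ≤ g σ).card ≤ 1 ∧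
    (K.filter fun ν => Facet ν σ ∧ g σ ≤ g ν).card ≤ 1

/-- A critical cell of `g`. -/
def IsCritical (K : Finset (Finset ℕ)) (g : Finset ℕ → ℝ) (σ : Finset ℕ) : Prop :=
  σ ∈ K ∧ (K.filter fun τ => Facet σ τ ∧ g τ ≤ g σ).card = 0 ∧
    (K.filter fun ν => Facet ν σ ∧ g σ ≤ g ν).card = 0


/-! The collections partition `K`, and a cell lies in a reduced collection exactly when it has
neither a lower cofacet nor a higher facet. The cells outside the reduced collections that are
not noncritical pairs are matched: a cell with a lower cofacet (resp. higher facet) with that cell,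
unique by the Morse-Bott condition, and the two cells of a reduced noncritical pair with each
other. Matched cells differ in dimension by one, so their contributions to the Euler
characteristic cancel. -/

theorem Finset.sum_eq_zero_of_matching {α β : Type*} [AddCommMonoid β] {s : Finset α}
    {g : α → β} (M : α → α → Prop) (symm : ∀ a ∈ s, ∀ b ∈ s, M a b → M b a)
    (irrefl : ∀ a ∈ s, ¬ M a a) (unique : ∀ a ∈ s, ∀ b ∈ s, ∀ c ∈ s, M a b → M a c → b = c)
    (exists_mem : ∀ a ∈ s, ∃ b ∈ s, M a b) (cancel : ∀ a ∈ s, ∀ b ∈ s, M a b → g a + g b = 0) :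
    ∑ a ∈ s, g a = 0 := by
  choose p hps hpM using exists_mem
  have hpp : ∀ a (ha : a ∈ s), p (p a ha) (hps a ha) = a := fun a ha =>
    unique _ (hps a ha) _ (hps _ _) _ ha (hpM _ _) (symm _ ha _ (hps a ha) (hpM a ha))
  refine Finset.sum_involution p (fun a ha => cancel a ha _ (hps a ha) (hpM a ha))
    (fun a ha _ hfix => irrefl a ha (by simpa only [hfix] using hpM a ha)) hps hpp

lemma Facet.ne {σ τ : Finset ℕ} (h : Facet σ τ) : σ ≠ τ := by
  rintro rfl
  exact absurd h.2 (by omega)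

lemma neg_one_pow_card_sub_one_add_eq_zero {σ τ : Finset ℕ} (hσ : σ.Nonempty)
    (hτ : τ.Nonempty) (h : Facet σ τ ∨ Facet τ σ) :
    (-1 : ℤ) ^ (σ.card - 1) + (-1) ^ (τ.card - 1) = 0 := by
  have := hσ.card_pos
  have := hτ.card_pos
  rcases h with h | h <;> have := h.2
  · rw [show τ.card - 1 = σ.card - 1 + 1 by omega, pow_succ]
    ring
  · rw [show σ.card - 1 = τ.card - 1 + 1 by omega, pow_succ]
    ring

lemma ConnectedOn.union {C D : Finset (Finset ℕ)} (hC : ConnectedOn C) (hD : ConnectedOn D)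
    (hCD : (C ∩ D).Nonempty) : ConnectedOn (C ∪ D) := by
  obtain ⟨σ, hσ⟩ := hCD
  rw [mem_inter] at hσ
  let adj x y := x ∈ C ∪ D ∧ y ∈ C ∪ D ∧ (closureOf {x} ∩ closureOf {y}).Nonempty
  have lift : ∀ {E}, E ⊆ C ∪ D → ConnectedOn E → ∀ a ∈ E, ∀ b ∈ E,
      Relation.ReflTransGen adj a b := fun hE hconn a ha b hb =>
    Relation.ReflTransGen.mono (fun _ _ hxy => ⟨hE hxy.1, hE hxy.2.1, hxy.2.2⟩) a b
      (hconn a ha b hb)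
  have via : ∀ a ∈ C ∪ D, Relation.ReflTransGen adj a σ ∧ Relation.ReflTransGen adj σ a := by
    intro a ha
    rcases mem_union.mp ha with ha | ha
    · exact ⟨lift subset_union_left hC a ha σ hσ.1, lift subset_union_left hC σ hσ.1 a ha⟩
    · exact ⟨lift subset_union_right hD a ha σ hσ.2, lift subset_union_right hD σ hσ.2 a ha⟩
  exact fun a ha b hb => (via a ha).1.trans (via b hb).2

section Collections

variable {K : Finset (Finset ℕ)} {f : Finset ℕ → ℝ}

lemma IsPreCollection.union {C D : Finset (Finset ℕ)} (hC : IsPreCollection K f C)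
    (hD : IsPreCollection K f D) (hCD : (C ∩ D).Nonempty) : IsPreCollection K f (C ∪ D) := by
  obtain ⟨σ, hσ⟩ := hCD
  rw [mem_inter] at hσ
  have value : ∀ τ ∈ C ∪ D, f τ = f σ := by
    intro τ hτ
    rcases mem_union.mp hτ with hτ | hτ
    · exact hC.2.2.1 τ hτ σ hσ.1
    · exact hD.2.2.1 τ hτ σ hσ.2
  exact ⟨union_subset hC.1 hD.1, hC.2.1.mono subset_union_left,
    fun τ hτ τ' hτ' => (value τ hτ).trans (value τ' hτ').symm,
    hC.2.2.2.union hD.2.2.2 ⟨σ, mem_inter.mpr hσ⟩⟩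

lemma IsCollection.eq_of_mem {C D : Finset (Finset ℕ)} {σ : Finset ℕ}
    (hC : IsCollection K f C) (hD : IsCollection K f D) (hσC : σ ∈ C) (hσD : σ ∈ D) :
    C = D := by
  have hCD := hC.1.union hD.1 ⟨σ, mem_inter.mpr ⟨hσC, hσD⟩⟩
  exact (hC.2 _ hCD subset_union_left).symm.trans (hD.2 _ hCD subset_union_right)

lemma isPreCollection_singleton {σ : Finset ℕ} (hσ : σ ∈ K) : IsPreCollection K f {σ} := by
  refine ⟨singleton_subset_iff.mpr hσ, singleton_nonempty σ, ?_, ?_⟩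
  · simp only [mem_singleton]
    rintro _ rfl _ rfl
    rfl
  · simp only [ConnectedOn, mem_singleton]
    rintro _ rfl _ rfl
    exact Relation.ReflTransGen.refl

lemma exists_isCollection_mem {σ : Finset ℕ} (hσ : σ ∈ K) :
    ∃ C, IsCollection K f C ∧ σ ∈ C := by
  set P := K.powerset.filter fun C => IsPreCollection K f C ∧ σ ∈ C
  have hP : ∀ {C}, C ∈ P ↔ IsPreCollection K f C ∧ σ ∈ C := fun {C} => by
    simp only [P, mem_filter, mem_powerset, and_iff_right_iff_imp]
    exact fun h => h.1.1
  obtain ⟨C, hCP, hmax⟩ :=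
    P.exists_max_image card ⟨{σ}, hP.mpr ⟨isPreCollection_singleton hσ, mem_singleton_self σ⟩⟩
  obtain ⟨hC, hσC⟩ := hP.mp hCP
  exact ⟨C, ⟨hC, fun D hD hCD =>
    (eq_of_subset_of_card_le hCD (hmax D (hP.mpr ⟨hD, hCD hσC⟩))).symm⟩, hσC⟩

def HasLowerCoface (K : Finset (Finset ℕ)) (f : Finset ℕ → ℝ) (σ : Finset ℕ) : Prop :=
  ∃ τ ∈ K, Facet σ τ ∧ f τ < f σ

def HasHigherFace (K : Finset (Finset ℕ)) (f : Finset ℕ → ℝ) (σ : Finset ℕ) : Prop :=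
  ∃ ν ∈ K, Facet ν σ ∧ f σ < f ν

lemma mem_reducedOf_iff {C : Finset (Finset ℕ)} {σ : Finset ℕ}
    (hconst : ∀ σ ∈ C, ∀ τ ∈ C, f σ = f τ) :
    σ ∈ reducedOf K f C ↔ σ ∈ C ∧ ¬ HasLowerCoface K f σ ∧ ¬ HasHigherFace K f σ := by
  rw [reducedOf, mem_filter]
  simp only [UpNoncrit, DownNoncrit, HasLowerCoface, HasHigherFace]
  constructor
  · rintro ⟨hσ, hup, hdown⟩
    refine ⟨hσ, ?_, ?_⟩
    · rintro ⟨τ, hτ, hστ, hlt⟩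
      exact hup ⟨τ, hτ, fun hτC => hlt.ne (hconst τ hτC σ hσ), hστ, hlt⟩
    · rintro ⟨τ, hτ, hτσ, hlt⟩
      exact hdown ⟨τ, hτ, fun hτC => hlt.ne' (hconst τ hτC σ hσ), hτσ, hlt⟩
  · rintro ⟨hσ, hup, hdown⟩
    exact ⟨hσ, fun ⟨τ, hτ, _, h⟩ => hup ⟨τ, hτ, h⟩, fun ⟨τ, hτ, _, h⟩ => hdown ⟨τ, hτ, h⟩⟩

theorem IsMorseBott.lowerCoface_unique (hf : IsMorseBott K f) {σ τ τ' : Finset ℕ}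
    (hσ : σ ∈ K) (hτ : τ ∈ K) (hτ' : τ' ∈ K) (h : Facet σ τ ∧ f τ < f σ)
    (h' : Facet σ τ' ∧ f τ' < f σ) : τ = τ' := by
  obtain ⟨C, hC, hσC⟩ := exists_isCollection_mem (f := f) hσ
  have hout : ∀ {ρ}, f ρ < f σ → ρ ∉ C := fun hlt hρ => hlt.ne (hC.1.2.2.1 _ hρ σ hσC)
  exact card_le_one.mp (hf C hC σ hσC).1 τ (mem_filter.mpr ⟨hτ, hout h.2, h⟩)
    τ' (mem_filter.mpr ⟨hτ', hout h'.2, h'⟩)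

theorem IsMorseBott.higherFace_unique (hf : IsMorseBott K f) {σ ν ν' : Finset ℕ}
    (hσ : σ ∈ K) (hν : ν ∈ K) (hν' : ν' ∈ K) (h : Facet ν σ ∧ f σ < f ν)
    (h' : Facet ν' σ ∧ f σ < f ν') : ν = ν' := by
  obtain ⟨C, hC, hσC⟩ := exists_isCollection_mem (f := f) hσ
  have hout : ∀ {ρ}, f σ < f ρ → ρ ∉ C := fun hlt hρ => hlt.ne' (hC.1.2.2.1 _ hρ σ hσC)
  exact card_le_one.mp (hf C hC σ hσC).2 ν (mem_filter.mpr ⟨hν, hout h.2, h⟩)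
    ν' (mem_filter.mpr ⟨hν', hout h'.2, h'⟩)

/-- If `ν < σ < τ` with `f ν > f σ > f τ`, the other cell `ρ` with `ν < ρ < τ` can be neither
above `f τ` nor below `f ν`, by uniqueness of the higher facet of `τ` and of the lower cofacet
of `ν`; hence `f ν ≤ f ρ ≤ f τ`, a contradiction. -/
theorem IsMorseBott.not_hasHigherFace_of_hasLowerCoface (hK : IsComplex K)
    (hf : IsMorseBott K f) {σ : Finset ℕ} (hσ : σ ∈ K) (h : HasLowerCoface K f σ) :
    ¬ HasHigherFace K f σ := by
  rintro ⟨ν, hν, hνσ, hfν⟩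
  obtain ⟨τ, hτ, hστ, hfτ⟩ := h
  obtain ⟨a, ha⟩ : ∃ a, τ \ σ = {a} :=
    card_eq_one.mp (by rw [card_sdiff_of_subset hστ.1]; have := hστ.2; omega)
  have haτ : a ∈ τ := (mem_sdiff.mp (ha ▸ mem_singleton_self a)).1
  have haσ : a ∉ σ := (mem_sdiff.mp (ha ▸ mem_singleton_self a)).2
  have haν : a ∉ ν := fun h => haσ (hνσ.1 h)
  have hνρ : Facet ν (insert a ν) := ⟨subset_insert a ν, (card_insert_of_notMem haν).symm⟩
  have hρτ : Facet (insert a ν) τ := ⟨insert_subset haτ (hνσ.1.trans hστ.1), by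
    rw [card_insert_of_notMem haν]; have := hνσ.2; have := hστ.2; omega⟩
  have hρ : insert a ν ∈ K := hK.2 τ hτ _ hρτ.1 (insert_nonempty a ν)
  have hρσ : insert a ν ≠ σ := fun h => haσ (h ▸ mem_insert_self a ν)
  have hle : f (insert a ν) ≤ f τ := by
    by_contra! hlt
    exact hρσ (hf.higherFace_unique hτ hρ hσ ⟨hρτ, hlt⟩ ⟨hστ, hfτ⟩)
  have hge : f ν ≤ f (insert a ν) := by
    by_contra! hlt
    exact hρσ (hf.lowerCoface_unique hν hρ hσ ⟨hνρ, hlt⟩ ⟨hνσ, hfν⟩)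
  linarith

def Matched (K : Finset (Finset ℕ)) (f : Finset ℕ → ℝ) (σ τ : Finset ℕ) : Prop :=
  (Facet σ τ ∧ f τ < f σ) ∨ (Facet τ σ ∧ f σ < f τ) ∨
    (Facet σ τ ∨ Facet τ σ) ∧ ∃ C, IsCollection K f C ∧ reducedOf K f C = {σ, τ}

lemma Matched.symm {σ τ : Finset ℕ} (h : Matched K f σ τ) : Matched K f τ σ := by
  rcases h with h | h | ⟨hfacet, C, hC, hR⟩
  · exact Or.inr (Or.inl h)
  · exact Or.inl h
  · exact Or.inr (Or.inr ⟨hfacet.symm, C, hC, hR.trans (pair_comm σ τ)⟩)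

lemma Matched.facet_or_facet {σ τ : Finset ℕ} (h : Matched K f σ τ) :
    Facet σ τ ∨ Facet τ σ := by
  rcases h with h | h | ⟨hfacet, -⟩
  · exact Or.inl h.1
  · exact Or.inr h.1
  · exact hfacet

lemma Matched.ne {σ τ : Finset ℕ} (h : Matched K f σ τ) : σ ≠ τ :=
  h.facet_or_facet.elim Facet.ne fun h => h.ne.symm

theorem Matched.unique (hK : IsComplex K) (hf : IsMorseBott K f) {σ τ τ' : Finset ℕ}
    (hσ : σ ∈ K) (hτ : τ ∈ K) (hτ' : τ' ∈ K) (h : Matched K f σ τ) (h' : Matched K f σ τ') :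
    τ = τ' := by
  have hne' := h'.ne
  have crit : ∀ {C ρ}, IsCollection K f C → reducedOf K f C = {σ, ρ} →
      ¬ HasLowerCoface K f σ ∧ ¬ HasHigherFace K f σ := fun hC hR =>
    ((mem_reducedOf_iff hC.1.2.2.1).mp (hR ▸ mem_insert_self _ _)).2
  have both := hf.not_hasHigherFace_of_hasLowerCoface hK hσ
  rcases h with h | h | ⟨-, C, hC, hR⟩ <;> rcases h' with h' | h' | ⟨-, C', hC', hR'⟩
  · exact hf.lowerCoface_unique hσ hτ hτ' h h'
  · exact absurd ⟨τ', hτ', h'⟩ (both ⟨τ, hτ, h⟩)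
  · exact absurd ⟨τ, hτ, h⟩ (crit hC' hR').1
  · exact absurd ⟨τ, hτ, h⟩ (both ⟨τ', hτ', h'⟩)
  · exact hf.higherFace_unique hσ hτ hτ' h h'
  · exact absurd ⟨τ, hτ, h⟩ (crit hC' hR').2
  · exact absurd ⟨τ', hτ', h'⟩ (crit hC hR).1
  · exact absurd ⟨τ', hτ', h'⟩ (crit hC hR).2
  · have hCC' : C = C' := hC.eq_of_mem hC' (mem_of_mem_filter σ (hR ▸ mem_insert_self _ _))
      (mem_of_mem_filter σ (hR' ▸ mem_insert_self _ _))
    have hτ'R : τ' ∈ ({σ, τ} : Finset (Finset ℕ)) := by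
      rw [← hR, hCC', hR']
      exact mem_insert_of_mem (mem_singleton_self τ')
    rw [mem_insert, mem_singleton] at hτ'R
    exact (hτ'R.resolve_left hne'.symm).symm

def IsEssential (K : Finset (Finset ℕ)) (f : Finset ℕ → ℝ) (σ : Finset ℕ) : Prop :=
  ¬ HasLowerCoface K f σ ∧ ¬ HasHigherFace K f σ ∧
    ∀ C, IsCollection K f C → σ ∈ C → ¬ IsNoncritPair f (reducedOf K f C)

lemma biUnion_reducedOf_eq_filter_isEssential {ι : Type*} [Fintype ι]
    {Cs : ι → Finset (Finset ℕ)} (hcoll : ∀ i, IsCollection K f (Cs i))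
    (hgood : ∀ i, ¬ IsNoncritPair f (reducedOf K f (Cs i)))
    (hall : ∀ C, IsCollection K f C → (reducedOf K f C).Nonempty →
      ¬ IsNoncritPair f (reducedOf K f C) → ∃ i, Cs i = C) :
    univ.biUnion (fun i => reducedOf K f (Cs i)) = K.filter (IsEssential K f) := by
  ext σ
  simp only [mem_biUnion, mem_univ, true_and, mem_filter]
  constructor
  · rintro ⟨i, hi⟩
    obtain ⟨hσC, hup, hdown⟩ := (mem_reducedOf_iff (hcoll i).1.2.2.1).mp hi
    refine ⟨(hcoll i).1.1 hσC, hup, hdown, fun C hC hσ => ?_⟩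
    rw [← (hcoll i).eq_of_mem hC hσC hσ]
    exact hgood i
  · rintro ⟨hσ, hup, hdown, hess⟩
    obtain ⟨C, hC, hσC⟩ := exists_isCollection_mem (f := f) hσ
    have hσR : σ ∈ reducedOf K f C := (mem_reducedOf_iff hC.1.2.2.1).mpr ⟨hσC, hup, hdown⟩
    obtain ⟨i, rfl⟩ := hall C hC ⟨σ, hσR⟩ (hess C hC hσC)
    exact ⟨i, hσR⟩

lemma exists_matched_of_not_isEssential {σ : Finset ℕ} (hσ : σ ∈ K)
    (h : ¬ IsEssential K f σ) : ∃ τ ∈ K, ¬ IsEssential K f τ ∧ Matched K f σ τ := by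
  by_cases hup : HasLowerCoface K f σ
  · obtain ⟨τ, hτ, hστ, hlt⟩ := hup
    exact ⟨τ, hτ, fun hess => hess.2.1 ⟨σ, hσ, hστ, hlt⟩, Or.inl ⟨hστ, hlt⟩⟩
  by_cases hdown : HasHigherFace K f σ
  · obtain ⟨τ, hτ, hτσ, hlt⟩ := hdown
    exact ⟨τ, hτ, fun hess => hess.1 ⟨σ, hσ, hτσ, hlt⟩, Or.inr (Or.inl ⟨hτσ, hlt⟩)⟩
  obtain ⟨C, hC, hσC, hpair⟩ :
      ∃ C, IsCollection K f C ∧ σ ∈ C ∧ IsNoncritPair f (reducedOf K f C) := by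
    simpa [IsEssential, hup, hdown] using h
  have partner : ∀ τ, reducedOf K f C = {σ, τ} → (Facet σ τ ∨ Facet τ σ) →
      ∃ τ ∈ K, ¬ IsEssential K f τ ∧ Matched K f σ τ := fun τ hR hστ =>
    have hτC : τ ∈ C := mem_of_mem_filter τ (hR ▸ mem_insert_of_mem (mem_singleton_self τ))
    ⟨τ, hC.1.1 hτC, fun hess => hess.2.2 C hC hτC hpair, Or.inr (Or.inr ⟨hστ, C, hC, hR⟩)⟩
  have hσR : σ ∈ reducedOf K f C := (mem_reducedOf_iff hC.1.2.2.1).mpr ⟨hσC, hup, hdown⟩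
  obtain ⟨ρ, ρ', hρρ', -, hR⟩ := hpair
  rw [hR, mem_insert, mem_singleton] at hσR
  rcases hσR with rfl | rfl
  · exact partner ρ' hR (Or.inl hρρ')
  · exact partner ρ (hR.trans (pair_comm ρ σ)) (Or.inr hρρ')

end Collections

/-- the sum of the Euler characteristics of the nonempty reduced
collections that are not noncritical pairs equals the Euler characteristic of `K`. -/
theorem statement10 (K : Finset (Finset ℕ)) (hK : IsComplex K) (f : Finset ℕ → ℝ)
    (hf : IsMorseBott K f) (l : ℕ) (Cs : Fin l → Finset (Finset ℕ))
    (hcoll : ∀ i, IsCollection K f (Cs i))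
    (hinj : Function.Injective Cs)
    (hgood : ∀ i, (reducedOf K f (Cs i)).Nonempty ∧
      ¬ IsNoncritPair f (reducedOf K f (Cs i)))
    (hall : ∀ C, IsCollection K f C → (reducedOf K f C).Nonempty →
      ¬ IsNoncritPair f (reducedOf K f C) → ∃ i, Cs i = C) :
    ∑ i, ∑ σ ∈ reducedOf K f (Cs i), (-1 : ℤ) ^ (σ.card - 1) =
      ∑ σ ∈ K, (-1 : ℤ) ^ (σ.card - 1) := by
  have hdisj : ((univ : Finset (Fin l)) : Set (Fin l)).PairwiseDisjoint
      (fun i => reducedOf K f (Cs i)) := fun i _ j _ hij =>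
    disjoint_left.mpr fun σ hσi hσj => hij (hinj ((hcoll i).eq_of_mem (hcoll j)
      (mem_of_mem_filter σ hσi) (mem_of_mem_filter σ hσj)))
  rw [← sum_biUnion hdisj,
    biUnion_reducedOf_eq_filter_isEssential hcoll (fun i => (hgood i).2) hall,
    ← sum_filter_add_sum_filter_not K (IsEssential K f), left_eq_add]
  have hmem : ∀ {σ}, σ ∈ K.filter (¬ IsEssential K f ·) → σ ∈ K := fun h => (mem_filter.mp h).1
  refine sum_eq_zero_of_matching (Matched K f) (fun _ _ _ _ h => h.symm) (fun _ _ h => h.ne rfl)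
    (fun _ hσ _ hτ _ hτ' => Matched.unique hK hf (hmem hσ) (hmem hτ) (hmem hτ')) (fun σ hσ => ?_)
    (fun σ hσ τ hτ h => neg_one_pow_card_sub_one_add_eq_zero (hK.1 σ (hmem hσ)) (hK.1 τ (hmem hτ))
      h.facet_or_facet)
  obtain ⟨τ, hτ, hness, hM⟩ := exists_matched_of_not_isEssential (hmem hσ) (mem_filter.mp hσ).2
  exact ⟨τ, mem_filter.mpr ⟨hτ, hness⟩, hM⟩
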